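/- arXiv:1505.01390 — 2 statements merged into one kernel-verified Lean document; each statement's English description precedes it below -/
import Mathlib

section
/- Let n and r be natural numbers with 1 ≤ r ≤ n, and let h : Fin n → ℝ be defined by h_r = (1 / C(n-1, r-1)) · Σ_{α ⊆ {1,…,n}, |α| = r} H(X_α | X_{ᾱ}), where H is a conditional-entropy function satisfying submodularity and monotonicity (i.e., H is a polymatroid rank function on subsets of {1,…,n}, with H(X_α | X_{ᾱ}) := H(X_{{1,…,n}}) - H(X_{ᾱ})). Then h_1 ≤ h_2 ≤ ⋯ ≤ h_n. -/
/-!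
Write `g(s) = f(univ) - f(sᶜ)` (this is `condRank f s`). By submodularity, the marginal gains
over `sᶜ` of the single elements of `s` add up to at least the gain of `s` itself, which reads
`∑_{i ∈ s} g(s \ {i}) ≤ (|s| - 1) g(s)`. Summing over all `s` of size `r + 1`, every `t` of
size `r` occurs `n - r` times on the left, so `(n - r) S_r ≤ r S_{r+1}` for the level sums `S_r`.
Since `r C(n-1, r) = (n - r) C(n-1, r-1)`, this is exactly `h_r ≤ h_{r+1}`.
-/

open Finset

variable {ι : Type*} [DecidableEq ι]

def IsSubmodular (f : Finset ι → ℝ) : Prop :=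
  ∀ A B : Finset ι, f (A ∪ B) + f (A ∩ B) ≤ f A + f B

theorem IsSubmodular.sub_le_sum_insert_sub {f : Finset ι → ℝ} (hf : IsSubmodular f)
    (B S : Finset ι) : f (B ∪ S) - f B ≤ ∑ i ∈ S, (f (insert i B) - f B) := by
  induction S using Finset.induction_on with
  | empty => simp
  | @insert a S haS ih =>
    have hunion : (B ∪ S) ∪ insert a B = B ∪ insert a S := by
      ext; simp only [mem_union, mem_insert]; tauto
    have hinter : (B ∪ S) ∩ insert a B = B := by
      ext x; simp only [mem_inter, mem_union, mem_insert]
      constructor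
      · rintro ⟨hB | hS, rfl | hB'⟩ <;> first | assumption | exact absurd hS haS
      · exact fun hB => ⟨.inl hB, .inr hB⟩
    have hstep := hf (B ∪ S) (insert a B)
    rw [hunion, hinter] at hstep
    rw [sum_insert haS]
    linarith

theorem Finset.sum_powersetCard_succ_sum_erase [Fintype ι] {M : Type*} [AddCommMonoid M]
    (c : Finset ι → M) (r : ℕ) :
    ∑ s ∈ powersetCard (r + 1) univ, ∑ i ∈ s, c (s.erase i) =
      ∑ t ∈ powersetCard r univ, (Fintype.card ι - r) • c t := by
  have hcount : ∀ t ∈ powersetCard r (univ : Finset ι),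
      (Fintype.card ι - r) • c t = ∑ _i ∈ tᶜ, c t := by
    intro t ht
    rw [sum_const, card_compl, mem_powersetCard_univ.mp ht]
  rw [sum_congr rfl hcount, sum_sigma' _ fun s => s, sum_sigma' _ fun t => tᶜ]
  refine sum_nbij' (fun p => ⟨p.1.erase p.2, p.2⟩) (fun p => ⟨insert p.2 p.1, p.2⟩)
    ?_ ?_ ?_ ?_ fun _ _ => rfl
  · rintro ⟨s, i⟩ h
    simp only [mem_sigma, mem_powersetCard_univ, mem_compl] at h ⊢
    rw [card_erase_of_mem h.2, h.1]
    simp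
  · rintro ⟨t, i⟩ h
    simp only [mem_sigma, mem_powersetCard_univ, mem_compl] at h ⊢
    rw [card_insert_of_notMem h.2, h.1]
    simp
  · rintro ⟨s, i⟩ h
    simp only [mem_sigma] at h
    simp [insert_erase h.2]
  · rintro ⟨t, i⟩ h
    simp only [mem_sigma, mem_compl] at h
    simp [erase_insert h.2]

theorem mul_choose_eq_sub_mul_choose {N r : ℕ} (hr : 1 ≤ r) :
    r * (N - 1).choose r = (N - r) * (N - 1).choose (r - 1) := by
  have h := Nat.choose_succ_right_eq (N - 1) (r - 1)
  rw [Nat.sub_add_cancel hr, show N - 1 - (r - 1) = N - r by omega] at h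
  rw [mul_comm, h, mul_comm]

variable [Fintype ι]

def condRank (f : Finset ι → ℝ) (s : Finset ι) : ℝ := f univ - f sᶜ

noncomputable def hanAverage (f : Finset ι → ℝ) (r : ℕ) : ℝ :=
  ((Fintype.card ι - 1).choose (r - 1) : ℝ)⁻¹ * ∑ s ∈ powersetCard r univ, condRank f s

namespace IsSubmodular

variable {f : Finset ι → ℝ}

theorem sum_condRank_erase_le (hf : IsSubmodular f) (s : Finset ι) :
    ∑ i ∈ s, condRank f (s.erase i) ≤ (#s - 1) * condRank f s := by
  have h := hf.sub_le_sum_insert_sub sᶜ s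
  rw [union_comm, union_compl, sum_sub_distrib, sum_const, nsmul_eq_mul] at h
  simp only [condRank, compl_erase, sum_sub_distrib, sum_const, nsmul_eq_mul]
  linarith

theorem card_sub_mul_sum_condRank_le (hf : IsSubmodular f) (r : ℕ) :
    ((Fintype.card ι - r : ℕ) : ℝ) * ∑ s ∈ powersetCard r univ, condRank f s ≤
      r * ∑ s ∈ powersetCard (r + 1) univ, condRank f s := by
  simp_rw [mul_sum, ← nsmul_eq_mul]
  rw [← sum_powersetCard_succ_sum_erase]
  refine sum_le_sum fun s hs => ?_
  have h := hf.sum_condRank_erase_le s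
  rwa [mem_powersetCard_univ.mp hs, Nat.cast_succ, add_sub_cancel_right, ← nsmul_eq_mul] at h

theorem hanAverage_le_succ (hf : IsSubmodular f) {r : ℕ} (hr : 1 ≤ r)
    (hrN : r < Fintype.card ι) : hanAverage f r ≤ hanAverage f (r + 1) := by
  have ha : (0 : ℝ) < (Fintype.card ι - 1).choose (r - 1) := mod_cast Nat.choose_pos (by omega)
  have hb : (0 : ℝ) < (Fintype.card ι - 1).choose r := mod_cast Nat.choose_pos (by omega)
  have hr' : (0 : ℝ) < r := mod_cast hr
  have hNr : ((Fintype.card ι - r : ℕ) : ℝ) ≠ 0 := by norm_cast; omega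
  have hchoose : (r * (Fintype.card ι - 1).choose r : ℝ) =
      (Fintype.card ι - r : ℕ) * (Fintype.card ι - 1).choose (r - 1) :=
    mod_cast mul_choose_eq_sub_mul_choose hr
  unfold hanAverage
  rw [add_tsub_cancel_right]
  calc _ = (r * (Fintype.card ι - 1).choose r : ℝ)⁻¹ *
        ((Fintype.card ι - r : ℕ) * ∑ s ∈ powersetCard r univ, condRank f s) := by
        rw [hchoose]; field_simp
    _ ≤ (r * (Fintype.card ι - 1).choose r : ℝ)⁻¹ *
        (r * ∑ s ∈ powersetCard (r + 1) univ, condRank f s) :=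
        mul_le_mul_of_nonneg_left (hf.card_sub_mul_sum_condRank_le r) (by positivity)
    _ = _ := by field_simp

theorem monotoneOn_hanAverage (hf : IsSubmodular f) :
    MonotoneOn (hanAverage f) (Set.Icc 1 (Fintype.card ι)) :=
  monotoneOn_of_le_add_one Set.ordConnected_Icc fun _ _ hr hr' =>
    hf.hanAverage_le_succ hr.1 hr'.2

end IsSubmodular

theorem han_monotone_general {n : ℕ} (f : Finset (Fin n) → ℝ)
    (hsub : ∀ A B : Finset (Fin n), f (A ∪ B) + f (A ∩ B) ≤ f A + f B)
    (h : ℕ → ℝ)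
    (hdef : ∀ r : ℕ, h r = (1 / (((n - 1).choose (r - 1) : ℕ) : ℝ)) *
      ∑ α ∈ powersetCard r (univ : Finset (Fin n)), (f univ - f αᶜ))
    (r₁ r₂ : ℕ) (h1 : 1 ≤ r₁) (h12 : r₁ ≤ r₂) (h2 : r₂ ≤ n) :
    h r₁ ≤ h r₂ := by
  obtain rfl : h = hanAverage f := funext fun r => by
    rw [hdef, hanAverage, Fintype.card_fin, one_div]
    rfl
  have hmem : ∀ {r}, 1 ≤ r → r ≤ n → r ∈ Set.Icc 1 (Fintype.card (Fin n)) := fun h1 h2 =>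
    ⟨h1, by rwa [Fintype.card_fin]⟩
  exact IsSubmodular.monotoneOn_hanAverage hsub (hmem h1 (h12.trans h2))
    (hmem (h1.trans h12) h2) h12

/-- Han-type inequality for polymatroid rank functions: with
`h r = (1/C(n-1,r-1)) ∑_{|α|=r} (f(univ) - f(αᶜ))` (the abstract version of
`H(X_α | X_ᾱ)` averaged over all subsets of size `r`), the sequence
`h 1 ≤ h 2 ≤ ⋯ ≤ h n` is nondecreasing. -/
theorem han_monotone {n : ℕ} (hn : 1 ≤ n) (f : Finset (Fin n) → ℝ)
    (h0 : f ∅ = 0)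
    (hmono : ∀ A B : Finset (Fin n), A ⊆ B → f A ≤ f B)
    (hsub : ∀ A B : Finset (Fin n), f (A ∪ B) + f (A ∩ B) ≤ f A + f B)
    (h : ℕ → ℝ)
    (hdef : ∀ r : ℕ, h r = (1 / (((n - 1).choose (r - 1) : ℕ) : ℝ)) *
      ∑ α ∈ powersetCard r (univ : Finset (Fin n)), (f univ - f αᶜ))
    (r₁ r₂ : ℕ) (h1 : 1 ≤ r₁) (h12 : r₁ ≤ r₂) (h2 : r₂ ≤ n) :
    h r₁ ≤ h r₂ :=
  han_monotone_general f hsub h hdef r₁ r₂ h1 h12 h2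
end

section
/- Let f : Finset (Fin n) → ℝ satisfy f(∅) = 0, monotonicity, and submodularity, and let 1 ≤ r ≤ n. Then (1/C(n-1,r-1)) Σ_{|α|=r} (f(univ) - f(αᶜ)) ≤ (1/C(n-1,n-1)) (f(univ) - f(∅)), i.e., h_r ≤ h_n = f(univ). -/
open Finset

section Aux

variable {n : ℕ} (f : Finset (Fin n) → ℝ)

/-- Diminishing returns from submodularity. -/
lemma han_dimret
    (hsub : ∀ A B : Finset (Fin n), f (A ∪ B) + f (A ∩ B) ≤ f A + f B)
    {A B : Finset (Fin n)} (hAB : A ⊆ B) {i : Fin n} (hi : i ∉ B) :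
    f (insert i B) - f B ≤ f (insert i A) - f A := by
  have h := hsub (insert i A) B
  have hU : insert i A ∪ B = insert i B := by
    rw [insert_union, union_eq_right.2 hAB]
  have hI : insert i A ∩ B = A := by
    rw [insert_inter_of_notMem hi, inter_eq_left.2 hAB]
  rw [hU, hI] at h
  linarith

/-- The "ordered marginal" of `i`. -/
noncomputable def hanG (i : Fin n) : ℝ := f (Finset.Iic i) - f (Finset.Iio i)

lemma han_key
    (hsub : ∀ A B : Finset (Fin n), f (A ∪ B) + f (A ∩ B) ≤ f A + f B)
    (α : Finset (Fin n)) :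
    f univ - f αᶜ ≤ ∑ i ∈ α, hanG f i := by
  induction α using Finset.induction_on_min with
  | empty => simp
  | insert m β hmin ih =>
    have hm : m ∉ β := fun h => lt_irrefl m (hmin m h)
    rw [Finset.sum_insert hm]
    have hcompl : (insert m β)ᶜ = βᶜ.erase m := by
      ext j; simp [Finset.mem_erase, and_comm, not_or]
    have hmc : m ∈ βᶜ := by simp [hm]
    have hins : insert m ((insert m β)ᶜ) = βᶜ := by
      rw [hcompl, insert_erase hmc]
    -- Iio m ⊆ (insert m β)ᶜ
    have hsubset : Finset.Iio m ⊆ (insert m β)ᶜ := by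
      intro j hj
      rw [Finset.mem_Iio] at hj
      rw [Finset.mem_compl, Finset.mem_insert]
      rintro (rfl | hjβ)
      · exact lt_irrefl _ hj
      · exact absurd hj (not_lt_of_gt (hmin j hjβ))
    have hmnot : m ∉ (insert m β)ᶜ := by simp
    have hmarg : f βᶜ - f ((insert m β)ᶜ) ≤ hanG f m := by
      have := han_dimret f hsub hsubset hmnot
      rw [hins] at this
      have hIic : insert m (Finset.Iio m) = Finset.Iic m := by
        ext j; simp [Finset.mem_insert, le_iff_lt_or_eq, or_comm]
      rw [hIic] at this
      exact this
    have := ih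
    unfold hanG at *
    linarith

lemma han_telescope (h0 : f ∅ = 0) :
    ∑ i : Fin n, hanG f i = f univ := by
  have key : ∀ i : Fin n, hanG f i =
      f (univ.filter (fun j : Fin n => (j : ℕ) < (i : ℕ) + 1))
        - f (univ.filter (fun j : Fin n => (j : ℕ) < (i : ℕ))) := by
    intro i
    unfold hanG
    congr 1
    · congr 1
      ext j
      simp only [Finset.mem_Iic, Finset.mem_filter, Finset.mem_univ, true_and, Fin.le_def]
      omega
    · congr 1
      ext j
      simp only [Finset.mem_Iio, Finset.mem_filter, Finset.mem_univ, true_and, Fin.lt_def]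
  simp_rw [key]
  rw [Fin.sum_univ_eq_sum_range
    (fun k => f (univ.filter (fun j : Fin n => (j : ℕ) < k + 1))
      - f (univ.filter (fun j : Fin n => (j : ℕ) < k)))]
  rw [Finset.sum_range_sub (fun k => f (univ.filter (fun j : Fin n => (j : ℕ) < k)))]
  have h1 : (univ.filter (fun j : Fin n => (j : ℕ) < n)) = univ := by
    ext j; simp [j.isLt]
  have h2 : (univ.filter (fun j : Fin n => (j : ℕ) < 0)) = ∅ := by
    ext j; simp
  rw [h1, h2, h0, sub_zero]

lemma han_count {r : ℕ} (h1 : 1 ≤ r) (i : Fin n) :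
    ((powersetCard r (univ : Finset (Fin n))).filter (fun α => i ∈ α)).card
      = (n - 1).choose (r - 1) := by
  obtain ⟨k, rfl⟩ : ∃ k, r = k + 1 := ⟨r - 1, by omega⟩
  have huniv : (univ : Finset (Fin n)) = insert i (univ.erase i) := by
    rw [insert_erase (mem_univ i)]
  rw [huniv, powersetCard_succ_insert (notMem_erase i _)]
  rw [filter_union]
  have hA : (powersetCard (k + 1) (univ.erase i)).filter (fun α => i ∈ α) = ∅ := by
    ext α
    simp only [mem_filter, mem_powersetCard, notMem_empty, iff_false, not_and]
    rintro ⟨hsub, -⟩ hi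
    exact notMem_erase i _ (hsub hi)
  have hB : ((powersetCard k (univ.erase i)).image (insert i)).filter (fun α => i ∈ α)
      = (powersetCard k (univ.erase i)).image (insert i) := by
    apply filter_true_of_mem
    intro α hα
    obtain ⟨β, -, rfl⟩ := mem_image.1 hα
    exact mem_insert_self i β
  rw [hA, hB, empty_union, card_image_of_injOn, card_powersetCard, card_erase_of_mem (mem_univ i),
    card_univ, Fintype.card_fin]
  · simp
  intro a ha b hb hab
  simp only [Finset.mem_coe, mem_powersetCard] at ha hb
  have hia : i ∉ a := fun h => notMem_erase i _ (ha.1 h)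
  have hib : i ∉ b := fun h => notMem_erase i _ (hb.1 h)
  have := congrArg (fun s => s.erase i) hab
  simpa [erase_insert hia, erase_insert hib] using this

end Aux

/-- Endpoint case of Han's inequality for polymatroids:
`h_r = (1/C(n-1,r-1)) ∑_{|α|=r} (f(univ) - f(αᶜ)) ≤ h_n = f(univ)` for `1 ≤ r ≤ n`. -/
theorem han_endpoint {n : ℕ} (f : Finset (Fin n) → ℝ)
    (h0 : f ∅ = 0)
    (hmono : ∀ A B : Finset (Fin n), A ⊆ B → f A ≤ f B)
    (hsub : ∀ A B : Finset (Fin n), f (A ∪ B) + f (A ∩ B) ≤ f A + f B)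
    (r : ℕ) (h1 : 1 ≤ r) (h2 : r ≤ n) :
    (1 / (((n - 1).choose (r - 1) : ℕ) : ℝ)) *
        ∑ α ∈ powersetCard r (univ : Finset (Fin n)), (f univ - f αᶜ) ≤
      f univ := by
  have hCpos : 0 < (n - 1).choose (r - 1) := Nat.choose_pos (by omega)
  have hCpos' : (0 : ℝ) < (((n - 1).choose (r - 1) : ℕ) : ℝ) := by
    exact_mod_cast hCpos
  rw [one_div, inv_mul_le_iff₀ hCpos']
  calc ∑ α ∈ powersetCard r (univ : Finset (Fin n)), (f univ - f αᶜ)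
      ≤ ∑ α ∈ powersetCard r (univ : Finset (Fin n)), ∑ i ∈ α, hanG f i :=
        Finset.sum_le_sum (fun α _ => han_key f hsub α)
    _ = ∑ i : Fin n, ((n - 1).choose (r - 1) : ℝ) * hanG f i := by
        rw [Finset.sum_comm' (s := powersetCard r (univ : Finset (Fin n)))
          (t := fun α => α) (t' := univ)
          (s' := fun i => (powersetCard r (univ : Finset (Fin n))).filter (fun α => i ∈ α))]
        · apply Finset.sum_congr rfl
          intro i _
          rw [Finset.sum_const, han_count h1 i, nsmul_eq_mul]
        · intro α i
          simp only [mem_filter, mem_univ, true_and, and_comm]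
    _ = ((n - 1).choose (r - 1) : ℝ) * f univ := by
        rw [← Finset.mul_sum, han_telescope f h0]
end
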